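/- For every t ∈ [0,1), the operators α_t and γ_t on ℓ²(ℕ×ℤ) satisfy: α_t γ_t = t γ_t α_t, α_t γ_t* = t γ_t* α_t, γ_t γ_t* = γ_t* γ_t, α_t* α_t + γ_t* γ_t = 1, and α_t α_t* + t² γ_t γ_t* = 1. -/

import Mathlib

/-- `ℓ²(ℕ×ℤ)`: the Hilbert space of square-summable complex families indexed by `ℕ × ℤ`. -/
noncomputable abbrev l2NZ : Type := lp (fun _ : ℕ × ℤ => ℂ) 2

/-- The standard orthonormal basis vectors `e_{n,k}` of `ℓ²(ℕ×ℤ)`. -/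
noncomputable def eNZ (n : ℕ) (k : ℤ) : l2NZ := lp.single 2 (n, k) (1 : ℂ)

/-- The defining property of the operators `α_t, γ_t` on `ℓ²(ℕ×ℤ)`:
`α_t e_{n,k} = √(1−t^{2n}) e_{n−1,k−1}` for `n ≥ 1`, `α_t e_{0,k} = 0`, and
`γ_t e_{n,k} = tⁿ e_{n,k−1}` (with the convention `0⁰ = 1`, so at `t = 0` this reads
`α₀ e_{n,k} = e_{n−1,k−1}` for `n ≥ 1`, `α₀ e_{0,k} = 0`, `γ₀ e_{0,k} = e_{0,k−1}`,
`γ₀ e_{n,k} = 0` for `n ≥ 1`). -/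
def IsAlphaGamma (t : ℝ) (α γ : l2NZ →L[ℂ] l2NZ) : Prop :=
  (∀ (n : ℕ) (k : ℤ),
    α (eNZ (n + 1) k) = (Real.sqrt (1 - t ^ (2 * (n + 1))) : ℂ) • eNZ n (k - 1)) ∧
  (∀ k : ℤ, α (eNZ 0 k) = 0) ∧
  (∀ (n : ℕ) (k : ℤ), γ (eNZ n k) = ((t ^ n : ℝ) : ℂ) • eNZ n (k - 1))

/-!
Every operator in sight is a weighted shift on the basis `e_{n,k}`, and the adjoint of a weighted
shift is the reverse weighted shift with conjugated weights:
`γ* e_{n,k} = tⁿ e_{n,k+1}` and `α* e_{n,k} = √(1 - t^{2n+2}) e_{n+1,k+1}`.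
Each relation can therefore be checked on basis vectors, where it becomes an identity of weights;
the last two reduce to `√(1 - t^{2m})² + t^{2m} = 1`, which needs `t² ≤ 1`.
-/

open ContinuousLinearMap

namespace HilbertBasis

variable {ι 𝕜 E : Type*} [RCLike 𝕜] [NormedAddCommGroup E] [InnerProductSpace 𝕜 E]
  (b : HilbertBasis ι 𝕜 E)

theorem ext_continuousLinearMap {F : Type*} [NormedAddCommGroup F] [NormedSpace 𝕜 F]
    {f g : E →L[𝕜] F} (h : ∀ i, f (b i) = g (b i)) : f = g :=
  ContinuousLinearMap.ext_on (Submodule.dense_iff_topologicalClosure_eq_top.mpr b.dense_span)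
    (Set.forall_mem_range.mpr h)

theorem ext_inner_left {x y : E} (h : ∀ i, inner 𝕜 (b i) x = inner 𝕜 (b i) y) : x = y :=
  b.repr.injective <| lp.ext <| funext fun i => by
    simp only [b.repr_apply_apply, h]

theorem adjoint_apply_of_apply_eq_smul [CompleteSpace E] {T : E →L[𝕜] E} {τ : ι → ι}
    (hτ : Function.Injective τ) {c : ι → 𝕜} (hT : ∀ j, T (b (τ j)) = c j • b j)
    (hT0 : ∀ i ∉ Set.range τ, T (b i) = 0) (j : ι) :
    adjoint T (b j) = starRingEnd 𝕜 (c j) • b (τ j) := by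
  classical
  refine b.ext_inner_left fun i => ?_
  rw [adjoint_inner_right, inner_smul_right]
  by_cases hi : i ∈ Set.range τ
  · obtain ⟨i, rfl⟩ := hi
    rw [hT, inner_smul_left, orthonormal_iff_ite.mp b.orthonormal,
      orthonormal_iff_ite.mp b.orthonormal, hτ.eq_iff]
    split_ifs with hij <;> simp [hij]
  · have hij : i ≠ τ j := fun hij => hi ⟨j, hij.symm⟩
    rw [hT0 i hi, inner_zero_left, orthonormal_iff_ite.mp b.orthonormal, if_neg hij, mul_zero]

end HilbertBasis

noncomputable def eNZBasis : HilbertBasis (ℕ × ℤ) ℂ l2NZ := default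

theorem eNZBasis_apply (i : ℕ × ℤ) : eNZBasis i = eNZ i.1 i.2 := by
  rw [eNZ, ← eNZBasis.repr_symm_single]
  rfl

theorem ext_eNZ {f g : l2NZ →L[ℂ] l2NZ} (h : ∀ n k, f (eNZ n k) = g (eNZ n k)) : f = g :=
  eNZBasis.ext_continuousLinearMap fun i => by simpa only [eNZBasis_apply] using h i.1 i.2

theorem one_sub_pow_two_mul_nonneg {t : ℝ} (ht : t ^ 2 ≤ 1) (n : ℕ) :
    0 ≤ 1 - t ^ (2 * n) := by
  rw [pow_mul]
  linarith [pow_le_one₀ (sq_nonneg t) ht (n := n)]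

namespace IsAlphaGamma

variable {t : ℝ} {α γ : l2NZ →L[ℂ] l2NZ}

theorem adjoint_gamma_apply (h : IsAlphaGamma t α γ) (n : ℕ) (k : ℤ) :
    adjoint γ (eNZ n k) = ((t ^ n : ℝ) : ℂ) • eNZ n (k + 1) := by
  have hτ : Function.Injective fun i : ℕ × ℤ => (i.1, i.2 + 1) := fun i j hij => by
    simpa [Prod.ext_iff] using hij
  have key := eNZBasis.adjoint_apply_of_apply_eq_smul (T := γ) hτ
    (c := fun i => ((t ^ i.1 : ℝ) : ℂ))
    (fun i => by simp only [eNZBasis_apply, h.2.2, add_sub_cancel_right])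
    (fun i hi => absurd ⟨(i.1, i.2 - 1), by simp⟩ hi) (n, k)
  simpa only [eNZBasis_apply, Complex.conj_ofReal] using key

theorem adjoint_alpha_apply (h : IsAlphaGamma t α γ) (n : ℕ) (k : ℤ) :
    adjoint α (eNZ n k) = (√(1 - t ^ (2 * (n + 1))) : ℂ) • eNZ (n + 1) (k + 1) := by
  have hτ : Function.Injective fun i : ℕ × ℤ => (i.1 + 1, i.2 + 1) := fun i j hij => by
    simpa [Prod.ext_iff] using hij
  have key := eNZBasis.adjoint_apply_of_apply_eq_smul (T := α) hτ
    (c := fun i => (√(1 - t ^ (2 * (i.1 + 1))) : ℂ))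
    (fun i => by simp only [eNZBasis_apply, h.1, add_sub_cancel_right])
    (fun i hi => by
      obtain ⟨_ | n, k⟩ := i
      · simpa only [eNZBasis_apply] using h.2.1 k
      · exact absurd ⟨(n, k - 1), by simp⟩ hi) (n, k)
  simpa only [eNZBasis_apply, Complex.conj_ofReal] using key

theorem alpha_mul_gamma (h : IsAlphaGamma t α γ) : α * γ = (t : ℂ) • (γ * α) := by
  have ⟨hα, hα0, hγ⟩ := h
  refine ext_eNZ fun n k => ?_
  cases n with
  | zero => simp only [mul_apply_eq_comp, smul_apply, hα0, hγ, map_smul, map_zero, smul_zero]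
  | succ n =>
    simp only [mul_apply_eq_comp, smul_apply, hα, hγ, map_smul, smul_smul]
    congr 1
    push_cast
    ring

theorem alpha_mul_adjoint_gamma (h : IsAlphaGamma t α γ) :
    α * adjoint γ = (t : ℂ) • (adjoint γ * α) := by
  have ⟨hα, hα0, _⟩ := h
  refine ext_eNZ fun n k => ?_
  cases n with
  | zero =>
    simp only [mul_apply_eq_comp, smul_apply, hα0, h.adjoint_gamma_apply, map_smul, map_zero,
      smul_zero]
  | succ n =>
    simp only [mul_apply_eq_comp, smul_apply, hα, h.adjoint_gamma_apply, map_smul, smul_smul,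
      add_sub_cancel_right, sub_add_cancel]
    congr 1
    push_cast
    ring

theorem gamma_mul_adjoint_gamma (h : IsAlphaGamma t α γ) :
    γ * adjoint γ = adjoint γ * γ :=
  ext_eNZ fun n k => by
    simp only [mul_apply_eq_comp, h.2.2, h.adjoint_gamma_apply, map_smul, add_sub_cancel_right,
      sub_add_cancel]

theorem adjoint_alpha_mul_alpha_add (h : IsAlphaGamma t α γ) (ht : t ^ 2 ≤ 1) :
    adjoint α * α + adjoint γ * γ = 1 := by
  have ⟨hα, hα0, hγ⟩ := h
  refine ext_eNZ fun n k => ?_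
  cases n with
  | zero => simp [hα0, hγ, h.adjoint_gamma_apply]
  | succ n =>
    simp only [add_apply, mul_apply_eq_comp, one_apply_eq_self, hα, hγ, h.adjoint_alpha_apply,
      h.adjoint_gamma_apply, map_smul, smul_smul, sub_add_cancel, ← add_smul]
    rw [← Complex.ofReal_mul, Real.mul_self_sqrt (one_sub_pow_two_mul_nonneg ht (n + 1))]
    convert one_smul ℂ (eNZ (n + 1) k) using 2
    push_cast
    ring

theorem alpha_mul_adjoint_alpha_add (h : IsAlphaGamma t α γ) (ht : t ^ 2 ≤ 1) :
    α * adjoint α + ((t : ℂ) ^ 2) • (γ * adjoint γ) = 1 := by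
  have ⟨hα, _, hγ⟩ := h
  refine ext_eNZ fun n k => ?_
  simp only [add_apply, mul_apply_eq_comp, smul_apply, one_apply_eq_self, hα, hγ,
    h.adjoint_alpha_apply, h.adjoint_gamma_apply, map_smul, smul_smul, add_sub_cancel_right,
    ← add_smul]
  rw [← Complex.ofReal_mul, Real.mul_self_sqrt (one_sub_pow_two_mul_nonneg ht (n + 1))]
  convert one_smul ℂ (eNZ n k) using 2
  push_cast
  ring

end IsAlphaGamma

open ContinuousLinearMap in
/-- **Statement 8.** For `t ∈ [0,1)`, the operators `α_t, γ_t` satisfy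
`α_t γ_t = t γ_t α_t`, `α_t γ_t* = t γ_t* α_t`, `γ_t γ_t* = γ_t* γ_t`,
`α_t* α_t + γ_t* γ_t = 1`, and `α_t α_t* + t² γ_t γ_t* = 1`. -/
theorem alphaGamma_relations (t : ℝ) (ht0 : 0 ≤ t) (ht1 : t < 1)
    (α γ : l2NZ →L[ℂ] l2NZ) (h : IsAlphaGamma t α γ) :
    α * γ = (t : ℂ) • (γ * α) ∧
    α * adjoint γ = (t : ℂ) • (adjoint γ * α) ∧
    γ * adjoint γ = adjoint γ * γ ∧
    adjoint α * α + adjoint γ * γ = 1 ∧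
    α * adjoint α + ((t : ℂ) ^ 2) • (γ * adjoint γ) = 1 := by
  have ht : t ^ 2 ≤ 1 := pow_le_one₀ ht0 ht1.le
  exact ⟨h.alpha_mul_gamma, h.alpha_mul_adjoint_gamma, h.gamma_mul_adjoint_gamma,
    h.adjoint_alpha_mul_alpha_add ht, h.alpha_mul_adjoint_alpha_add ht⟩
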